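/- Step-1 monotonicity of the co-clustering iterations: let (C_X^{(i)}, C_W^{(i)}), i = 0, 1, 2, …, be a sequence of clustering pairs such that for each i, (a) for every x ∈ X, D(p(·|x) ‖ p̂^{(i)}(·|C_X^{(i+1)} x)) ≤ D(p(·|x) ‖ p̂^{(i)}(·|C_X^{(i)} x)), where p̂^{(i)} is computed from (C_X^{(i)}, C_W^{(i)}), and (b) for every w ∈ W, D(p(·|w) ‖ p̃^{(i)}(·|C_W^{(i+1)} w)) ≤ D(p(·|w) ‖ p̃^{(i)}(·|C_W^{(i)} w)), where p̃^{(i)} is computed from (C_X^{(i+1)}, C_W^{(i)}). Then for every i, ℓ_A(C_X^{(i+1)}, C_W^{(i+1)}) ≤ ℓ_A(C_X^{(i)}, C_W^{(i)}), i.e., the updates monotonically decrease the objective and the objective values converge. -/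

import Mathlib

open scoped BigOperators

noncomputable section

/-- Kullback–Leibler divergence `D(g‖h)` between nonnegative functions on a finite type,
`D(g‖h) = ∑_{t : g t > 0} g t * log (g t / h t)`, with the convention `D(g‖h) = ⊤`
whenever `g t > 0 = h t` for some `t`. -/
def KLdiv {T : Type*} [Fintype T] (g h : T → ℝ) : EReal :=
  if ∃ t, 0 < g t ∧ h t = 0 then ⊤
  else ((∑ t ∈ Finset.univ.filter (fun t => 0 < g t),
      g t * Real.log (g t / h t) : ℝ) : EReal)

/-- Row marginal `p₁(x) = ∑_w p(x,w)`. -/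
def marg₁ {A B : Type*} [Fintype B] (p : A × B → ℝ) (x : A) : ℝ := ∑ w, p (x, w)

/-- Column marginal `p₂(w) = ∑_x p(x,w)`. -/
def marg₂ {A B : Type*} [Fintype A] (p : A × B → ℝ) (w : B) : ℝ := ∑ x, p (x, w)

/-- Co-clustered distribution `p*(x*,w*) = ∑_{x : C_X x = x*} ∑_{w : C_W w = w*} p(x,w)`. -/
def coclust {A B As Bs : Type*} [Fintype A] [Fintype B] [DecidableEq As] [DecidableEq Bs]
    (p : A × B → ℝ) (CX : A → As) (CW : B → Bs) : As × Bs → ℝ :=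
  fun c => ∑ x ∈ Finset.univ.filter (fun x => CX x = c.1),
             ∑ w ∈ Finset.univ.filter (fun w => CW w = c.2), p (x, w)

/-- Approximating distribution
`p̂(x,w) = p*(C_X x, C_W w) · p₁(x) · p₂(w) / (p₁*(C_X x) · p₂*(C_W w))`. -/
def approx {A B As Bs : Type*} [Fintype A] [Fintype B] [Fintype As] [Fintype Bs]
    [DecidableEq As] [DecidableEq Bs]
    (p : A × B → ℝ) (CX : A → As) (CW : B → Bs) : A × B → ℝ :=
  fun c =>
    coclust p CX CW (CX c.1, CW c.2) * marg₁ p c.1 * marg₂ p c.2 /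
      (marg₁ (coclust p CX CW) (CX c.1) * marg₂ (coclust p CX CW) (CW c.2))

/-- Conditional distribution `p(w|x) = p(x,w)/p₁(x)` on `B`. -/
def condRow {A B : Type*} [Fintype B] (p : A × B → ℝ) (x : A) : B → ℝ :=
  fun w => p (x, w) / marg₁ p x

/-- Conditional distribution `p(x|w) = p(x,w)/p₂(w)` on `A`. -/
def condCol {A B : Type*} [Fintype A] (p : A × B → ℝ) (w : B) : A → ℝ :=
  fun x => p (x, w) / marg₂ p w

/-- Conditional approximating distribution
`p̂(w|x*) = p*(x*, C_W w) · p₂(w) / (p₁*(x*) · p₂*(C_W w))` on `B`. -/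
def approxCondRow {A B As Bs : Type*} [Fintype A] [Fintype B] [Fintype As] [Fintype Bs]
    [DecidableEq As] [DecidableEq Bs]
    (p : A × B → ℝ) (CX : A → As) (CW : B → Bs) (xs : As) : B → ℝ :=
  fun w =>
    coclust p CX CW (xs, CW w) * marg₂ p w /
      (marg₁ (coclust p CX CW) xs * marg₂ (coclust p CX CW) (CW w))

/-- Conditional approximating distribution
`p̂(x|w*) = p*(C_X x, w*) · p₁(x) / (p₂*(w*) · p₁*(C_X x))` on `A`. -/
def approxCondCol {A B As Bs : Type*} [Fintype A] [Fintype B] [Fintype As] [Fintype Bs]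
    [DecidableEq As] [DecidableEq Bs]
    (p : A × B → ℝ) (CX : A → As) (CW : B → Bs) (ws : Bs) : A → ℝ :=
  fun x =>
    coclust p CX CW (CX x, ws) * marg₁ p x /
      (marg₂ (coclust p CX CW) ws * marg₁ (coclust p CX CW) (CX x))

/-- Mutual information `I(p) = ∑_{x,w} p(x,w) · log (p(x,w)/(p₁(x)·p₂(w)))`
(summing over all pairs; used for the strictly positive original distribution). -/
def mutualInfoFull {A B : Type*} [Fintype A] [Fintype B] (p : A × B → ℝ) : ℝ :=
  ∑ x, ∑ w, p (x, w) * Real.log (p (x, w) / (marg₁ p x * marg₂ p w))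

/-- Mutual information `I(p*) = ∑_{(x*,w*) : p*(x*,w*) > 0} p*(x*,w*) ·
log (p*(x*,w*)/(p₁*(x*)·p₂*(w*)))` (summing only over positive entries). -/
def mutualInfoPos {A B : Type*} [Fintype A] [Fintype B] (p : A × B → ℝ) : ℝ :=
  ∑ c ∈ Finset.univ.filter (fun c : A × B => 0 < p c),
    p c * Real.log (p c / (marg₁ p c.1 * marg₂ p c.2))

/-- The co-clustering objective `ℓ_A(C_X, C_W) = I(p) − I(p*)`. -/
def lossA {A B As Bs : Type*} [Fintype A] [Fintype B] [Fintype As] [Fintype Bs]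
    [DecidableEq As] [DecidableEq Bs]
    (p : A × B → ℝ) (CX : A → As) (CW : B → Bs) : ℝ :=
  mutualInfoFull p - mutualInfoPos (coclust p CX CW)

/-- The elastic coupled co-clustering objective
`ℓ_T(C_Y, C_Z) = I(q) − I(q*) + α·D(q₁*‖π) + β·D(q₂*‖ρ)`. -/
def lossT {A B As Bs : Type*} [Fintype A] [Fintype B] [Fintype As] [Fintype Bs]
    [DecidableEq As] [DecidableEq Bs]
    (q : A × B → ℝ) (CY : A → As) (CZ : B → Bs) (π : As → ℝ) (ρ : Bs → ℝ)
    (α β : ℝ) : EReal :=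
  ((mutualInfoFull q - mutualInfoPos (coclust q CY CZ) : ℝ) : EReal)
    + (α : EReal) * KLdiv (marg₁ (coclust q CY CZ)) π
    + (β : EReal) * KLdiv (marg₂ (coclust q CY CZ)) ρ

end


/-!
Fix the column clustering `CW` and write `q*`, `r*` for the co-clustered distributions of a new
row clustering `C'` and the old one `CX`. Then `∑ₓ p₁(x) D(p(·|x) ‖ p̂(·|C' x))` equals
`I(p) - ∑ q* log (r* / (r₁* r₂*))`. Since `q*` and `r*` have the same column marginal, Gibbs'
inequality bounds the cross term by `I(q*)`, so `ℓ_A(C', CW)` is at most this objective, which the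
row update does not increase, and which at `C' = CX` is `ℓ_A(CX, CW)`. The column update is the
row update of the transposed distribution.
-/

open Finset Real

section Marginals

variable {A B : Type*}

lemma le_marg₁ [Fintype B] {p : A × B → ℝ} (hp : ∀ c, 0 ≤ p c) (a : A) (b : B) :
    p (a, b) ≤ marg₁ p a :=
  single_le_sum (f := fun b => p (a, b)) (fun b _ => hp (a, b)) (mem_univ b)

lemma le_marg₂ [Fintype A] {p : A × B → ℝ} (hp : ∀ c, 0 ≤ p c) (a : A) (b : B) :
    p (a, b) ≤ marg₂ p b :=
  single_le_sum (f := fun a => p (a, b)) (fun a _ => hp (a, b)) (mem_univ a)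

lemma marg₁_nonneg [Fintype B] {p : A × B → ℝ} (hp : ∀ c, 0 ≤ p c) (a : A) : 0 ≤ marg₁ p a :=
  sum_nonneg fun b _ => hp (a, b)

lemma condRow_pos [Fintype B] {p : A × B → ℝ} (hp : ∀ c, 0 < p c) (a : A) (b : B) :
    0 < condRow p a b :=
  div_pos (hp _) ((hp _).trans_le (le_marg₁ (fun c => (hp c).le) a b))

end Marginals

lemma sum_sub_sum_le_sum_mul_log_div {ι : Type*} [Fintype ι] {q s : ι → ℝ}
    (hq : ∀ i, 0 ≤ q i) (hs : ∀ i, 0 ≤ s i) (hqs : ∀ i, 0 < q i → 0 < s i) :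
    ∑ i, q i - ∑ i, s i ≤ ∑ i, q i * log (q i / s i) := by
  rw [← sum_sub_distrib]
  refine sum_le_sum fun i _ => ?_
  rcases (hq i).eq_or_lt with h | h
  · simp [← h, hs i]
  · have hsi := hqs i h
    calc q i - s i = q i * (1 - (q i / s i)⁻¹) := by field_simp
      _ ≤ q i * log (q i / s i) :=
        mul_le_mul_of_nonneg_left (one_sub_inv_le_log_of_pos (div_pos h hsi)) h.le

section CrossMutualInfo

variable {A B : Type*} [Fintype A] [Fintype B]

noncomputable def crossMutualInfo (q r : A × B → ℝ) : ℝ :=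
  ∑ c, q c * log (r c / (marg₁ r c.1 * marg₂ r c.2))

lemma mutualInfoPos_eq_crossMutualInfo {q : A × B → ℝ} (hq : ∀ c, 0 ≤ q c) :
    mutualInfoPos q = crossMutualInfo q q := by
  rw [mutualInfoPos, crossMutualInfo, sum_filter]
  refine sum_congr rfl fun c _ => ?_
  split_ifs with h
  · rfl
  · simp [le_antisymm (not_lt.1 h) (hq c)]

/-- The gap is the divergence of `q` from `s (a, b) = q₁ a * r (a, b) / r₁ a`, whose total mass
is at most that of `q`. -/
theorem crossMutualInfo_le_of_marg₂_eq {q r : A × B → ℝ} (hq : ∀ c, 0 ≤ q c)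
    (hr : ∀ c, 0 ≤ r c) (hqr : ∀ c, 0 < q c → 0 < r c) (hmarg : marg₂ q = marg₂ r) :
    crossMutualInfo q r ≤ crossMutualInfo q q := by
  set s : A × B → ℝ := fun c => marg₁ q c.1 * r c / marg₁ r c.1 with hs_def
  have hs : ∀ c, 0 ≤ s c := fun c =>
    div_nonneg (mul_nonneg (marg₁_nonneg hq _) (hr c)) (marg₁_nonneg hr _)
  have hqs : ∀ c, 0 < q c → 0 < s c := by
    rintro ⟨a, b⟩ hc
    have hrc := hqr _ hc
    exact div_pos (mul_pos (hc.trans_le (le_marg₁ hq a b)) hrc)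
      (hrc.trans_le (le_marg₁ hr a b))
  have hsum : ∑ c, s c ≤ ∑ c, q c := by
    simp only [hs_def, Fintype.sum_prod_type, mul_div_assoc, ← mul_sum, ← sum_div]
    exact sum_le_sum fun a _ => mul_le_of_le_one_right (marg₁_nonneg hq a) (div_self_le_one _)
  have hterm : ∀ c, q c * log (q c / (marg₁ q c.1 * marg₂ q c.2))
      - q c * log (r c / (marg₁ r c.1 * marg₂ r c.2)) = q c * log (q c / s c) := by
    rintro ⟨a, b⟩
    rcases (hq (a, b)).eq_or_lt with hc | hc
    · simp [← hc]
    have hrc := hqr _ hc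
    have hq₁ := hc.trans_le (le_marg₁ hq a b)
    have hq₂ := hc.trans_le (le_marg₂ hq a b)
    have hr₁ := hrc.trans_le (le_marg₁ hr a b)
    have hr₂ : 0 < marg₂ r b := hmarg ▸ hq₂
    rw [← mul_sub, ← log_div (by positivity) (by positivity), hs_def, hmarg]
    congr 2
    field_simp
  have hgibbs := sum_sub_sum_le_sum_mul_log_div hq hs hqs
  simp only [crossMutualInfo, ← hterm, sum_sub_distrib] at hgibbs ⊢
  linarith

end CrossMutualInfo

section Coclustering

variable {X W Xs Ws : Type*} [Fintype X] [Fintype W] [DecidableEq Xs] [DecidableEq Ws]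
  {p : X × W → ℝ} {CX : X → Xs} {CW : W → Ws}

lemma coclust_nonneg (hp : ∀ c, 0 ≤ p c) (c : Xs × Ws) : 0 ≤ coclust p CX CW c :=
  sum_nonneg fun _ _ => sum_nonneg fun _ _ => hp _

lemma coclust_apply_pos (hp : ∀ c, 0 < p c) (x : X) (w : W) :
    0 < coclust p CX CW (CX x, CW w) :=
  sum_pos' (fun _ _ => sum_nonneg fun _ _ => (hp _).le)
    ⟨x, by simp, sum_pos (fun _ _ => hp _) ⟨w, by simp⟩⟩

lemma exists_eq_of_coclust_ne_zero {c : Xs × Ws} (h : coclust p CX CW c ≠ 0) :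
    ∃ x w, (CX x, CW w) = c := by
  obtain ⟨x, hx, hxc⟩ := exists_ne_zero_of_sum_ne_zero h
  obtain ⟨w, hw, -⟩ := exists_ne_zero_of_sum_ne_zero hxc
  exact ⟨x, w, Prod.ext (mem_filter.1 hx).2 (mem_filter.1 hw).2⟩

lemma marg₂_coclust [Fintype Xs] (ws : Ws) :
    marg₂ (coclust p CX CW) ws = ∑ w with CW w = ws, marg₂ p w := by
  simp only [marg₂, coclust]
  rw [sum_fiberwise]
  exact sum_comm

lemma sum_coclust_mul [Fintype Xs] [Fintype Ws] (f : Xs × Ws → ℝ) :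
    ∑ c, coclust p CX CW c * f c = ∑ x, ∑ w, p (x, w) * f (CX x, CW w) := by
  simp only [coclust, Fintype.sum_prod_type, sum_mul]
  conv_rhs => rw [← sum_fiberwise univ CX]
  refine sum_congr rfl fun xs _ => ?_
  rw [sum_comm]
  refine sum_congr rfl fun x hx => ?_
  rw [← sum_fiberwise univ CW]
  refine sum_congr rfl fun ws _ => sum_congr rfl fun w hw => ?_
  rw [(mem_filter.1 hx).2, (mem_filter.1 hw).2]

end Coclustering

section KLdiv

variable {T : Type*} [Fintype T] {g h h' : T → ℝ}

lemma KLdiv_eq_sum (hg : ∀ t, 0 < g t) (hh : ∀ t, h t ≠ 0) :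
    KLdiv g h = ((∑ t, g t * log (g t / h t) : ℝ) : EReal) := by
  rw [KLdiv, if_neg fun ⟨t, _, ht⟩ => hh t ht, filter_true_of_mem fun t _ => hg t]

lemma ne_zero_of_KLdiv_le (hg : ∀ t, 0 < g t) (hh' : ∀ t, h' t ≠ 0)
    (hle : KLdiv g h ≤ KLdiv g h') (t : T) : h t ≠ 0 := by
  intro ht
  rw [KLdiv_eq_sum hg hh', KLdiv, if_pos ⟨t, hg t, ht⟩, top_le_iff] at hle
  exact EReal.coe_ne_top _ hle

lemma sum_mul_log_div_le_of_KLdiv_le (hg : ∀ t, 0 < g t) (hh' : ∀ t, h' t ≠ 0)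
    (hle : KLdiv g h ≤ KLdiv g h') :
    ∑ t, g t * log (g t / h t) ≤ ∑ t, g t * log (g t / h' t) := by
  rwa [KLdiv_eq_sum hg (ne_zero_of_KLdiv_le hg hh' hle), KLdiv_eq_sum hg hh',
    EReal.coe_le_coe_iff] at hle

end KLdiv

section RowUpdate

variable {X W Xs Ws : Type*} [Fintype X] [Fintype W] [Fintype Xs] [Fintype Ws]
  [DecidableEq Xs] [DecidableEq Ws] {p : X × W → ℝ} {CX C' : X → Xs} {CW : W → Ws}

/-- `∑ₓ p₁(x) D(p(·|x) ‖ p̂(·|C' x))`, with `p̂` computed from `(CX, CW)`. -/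
noncomputable def rowDivergence (p : X × W → ℝ) (CX : X → Xs) (CW : W → Ws) (C' : X → Xs) :
    ℝ :=
  ∑ x, marg₁ p x * ∑ w, condRow p x w * log (condRow p x w / approxCondRow p CX CW (C' x) w)

lemma approxCondRow_self_pos (hp : ∀ c, 0 < p c) (x : X) (w : W) :
    0 < approxCondRow p CX CW (CX x) w := by
  have hp' : ∀ c, 0 ≤ p c := fun c => (hp c).le
  have hr := coclust_apply_pos (CX := CX) (CW := CW) hp x w
  have hr₁ := hr.trans_le (le_marg₁ (coclust_nonneg hp') _ _)
  have hr₂ := hr.trans_le (le_marg₂ (coclust_nonneg hp') _ _)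
  have hp₂ := (hp (x, w)).trans_le (le_marg₂ hp' x w)
  exact div_pos (mul_pos hr hp₂) (mul_pos hr₁ hr₂)

lemma rowDivergence_eq (hp : ∀ c, 0 < p c)
    (hr : ∀ x w, 0 < coclust p CX CW (C' x, CW w)) :
    rowDivergence p CX CW C'
      = mutualInfoFull p - crossMutualInfo (coclust p C' CW) (coclust p CX CW) := by
  have hp' : ∀ c, 0 ≤ p c := fun c => (hp c).le
  rw [crossMutualInfo, sum_coclust_mul, mutualInfoFull, ← sum_sub_distrib]
  refine sum_congr rfl fun x _ => ?_
  rw [mul_sum, ← sum_sub_distrib]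
  refine sum_congr rfl fun w _ => ?_
  have hxw := hp (x, w)
  have hp₁ := hxw.trans_le (le_marg₁ hp' x w)
  have hp₂ := hxw.trans_le (le_marg₂ hp' x w)
  have hrxw := hr x w
  have hr₁ := hrxw.trans_le (le_marg₁ (coclust_nonneg hp') _ _)
  have hr₂ := hrxw.trans_le (le_marg₂ (coclust_nonneg hp') _ _)
  simp only [condRow, approxCondRow]
  rw [← mul_assoc, mul_div_cancel₀ _ hp₁.ne', ← mul_sub,
    ← log_div (by positivity) (by positivity)]
  congr 2
  field_simp

lemma lossA_eq_rowDivergence (hp : ∀ c, 0 < p c) :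
    lossA p CX CW = rowDivergence p CX CW CX := by
  rw [rowDivergence_eq hp fun x w => coclust_apply_pos hp x w, lossA,
    mutualInfoPos_eq_crossMutualInfo (coclust_nonneg fun c => (hp c).le)]

lemma lossA_le_rowDivergence (hp : ∀ c, 0 < p c)
    (hr : ∀ x w, 0 < coclust p CX CW (C' x, CW w)) :
    lossA p C' CW ≤ rowDivergence p CX CW C' := by
  have hp' : ∀ c, 0 ≤ p c := fun c => (hp c).le
  rw [rowDivergence_eq hp hr, lossA, mutualInfoPos_eq_crossMutualInfo (coclust_nonneg hp')]
  refine sub_le_sub_left (crossMutualInfo_le_of_marg₂_eq (coclust_nonneg hp')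
    (coclust_nonneg hp') (fun c hc => ?_) ?_) _
  · obtain ⟨x, w, rfl⟩ := exists_eq_of_coclust_ne_zero hc.ne'
    exact hr x w
  · funext ws
    rw [marg₂_coclust, marg₂_coclust]

theorem lossA_le_of_row_update (hp : ∀ c, 0 < p c)
    (h : ∀ x, KLdiv (condRow p x) (approxCondRow p CX CW (C' x))
      ≤ KLdiv (condRow p x) (approxCondRow p CX CW (CX x))) :
    lossA p C' CW ≤ lossA p CX CW := by
  have hold : ∀ x w, approxCondRow p CX CW (CX x) w ≠ 0 := fun x w =>
    (approxCondRow_self_pos hp x w).ne'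
  have hnew : ∀ x w, 0 < coclust p CX CW (C' x, CW w) := fun x w =>
    (coclust_nonneg (fun c => (hp c).le) _).lt_of_ne' <| left_ne_zero_of_mul <|
      (div_ne_zero_iff.1 (ne_zero_of_KLdiv_le (condRow_pos hp x) (hold x) (h x) w)).1
  calc lossA p C' CW ≤ rowDivergence p CX CW C' := lossA_le_rowDivergence hp hnew
    _ ≤ rowDivergence p CX CW CX := sum_le_sum fun x _ =>
        mul_le_mul_of_nonneg_left
          (sum_mul_log_div_le_of_KLdiv_le (condRow_pos hp x) (hold x) (h x))
          (marg₁_nonneg (fun c => (hp c).le) x)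
    _ = lossA p CX CW := (lossA_eq_rowDivergence hp).symm

end RowUpdate

section Transpose

lemma mutualInfoFull_comp_swap {A B : Type*} [Fintype A] [Fintype B] (p : A × B → ℝ) :
    mutualInfoFull (p ∘ Prod.swap) = mutualInfoFull p := by
  rw [mutualInfoFull, mutualInfoFull, sum_comm]
  simp only [marg₁, marg₂, Function.comp_apply, Prod.swap_prod_mk, mul_comm (∑ x, p (x, _))]

lemma mutualInfoPos_comp_swap {A B : Type*} [Fintype A] [Fintype B] (p : A × B → ℝ) :
    mutualInfoPos (p ∘ Prod.swap) = mutualInfoPos p := by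
  rw [mutualInfoPos, mutualInfoPos, sum_filter, sum_filter]
  refine Fintype.sum_equiv (Equiv.prodComm B A) _ _ fun c => ?_
  simp [marg₁, marg₂, mul_comm]

lemma condRow_comp_swap {A B : Type*} [Fintype A] (p : A × B → ℝ) :
    condRow (p ∘ Prod.swap) = condCol p := rfl

variable {X W Xs Ws : Type*} [Fintype X] [Fintype W] [DecidableEq Xs] [DecidableEq Ws]
  (p : X × W → ℝ) (CX : X → Xs) (CW : W → Ws)

lemma coclust_comp_swap : coclust (p ∘ Prod.swap) CW CX = coclust p CX CW ∘ Prod.swap :=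
  funext fun _ => sum_comm

variable [Fintype Xs] [Fintype Ws]

lemma approxCondRow_comp_swap :
    approxCondRow (p ∘ Prod.swap) CW CX = approxCondCol p CX CW := by
  funext ws x
  simp only [approxCondRow, approxCondCol, coclust_comp_swap]
  rfl

lemma lossA_comp_swap : lossA (p ∘ Prod.swap) CW CX = lossA p CX CW := by
  rw [lossA, lossA, coclust_comp_swap, mutualInfoFull_comp_swap, mutualInfoPos_comp_swap]

end Transpose

theorem lossA_le_of_col_update {X W Xs Ws : Type*} [Fintype X] [Fintype W] [Fintype Xs]
    [Fintype Ws] [DecidableEq Xs] [DecidableEq Ws] {p : X × W → ℝ} (hp : ∀ c, 0 < p c)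
    {CX : X → Xs} {CW C' : W → Ws}
    (h : ∀ w, KLdiv (condCol p w) (approxCondCol p CX CW (C' w))
      ≤ KLdiv (condCol p w) (approxCondCol p CX CW (CW w))) :
    lossA p CX C' ≤ lossA p CX CW := by
  rw [← lossA_comp_swap, ← lossA_comp_swap p]
  exact lossA_le_of_row_update (fun c => hp c.swap)
    (by simpa only [condRow_comp_swap, approxCondRow_comp_swap] using h)

theorem step1_monotone_general {X W Xs Ws : Type*} [Fintype X] [Fintype W]
    [Fintype Xs] [Fintype Ws] [DecidableEq Xs] [DecidableEq Ws]
    (p : X × W → ℝ) (hpos : ∀ c, 0 < p c)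
    (CXs : ℕ → X → Xs) (CWs : ℕ → W → Ws)
    (ha : ∀ i : ℕ, ∀ x : X,
      KLdiv (condRow p x) (approxCondRow p (CXs i) (CWs i) (CXs (i + 1) x))
        ≤ KLdiv (condRow p x) (approxCondRow p (CXs i) (CWs i) (CXs i x)))
    (hb : ∀ i : ℕ, ∀ w : W,
      KLdiv (condCol p w) (approxCondCol p (CXs (i + 1)) (CWs i) (CWs (i + 1) w))
        ≤ KLdiv (condCol p w) (approxCondCol p (CXs (i + 1)) (CWs i) (CWs i w))) :
    ∀ i : ℕ, lossA p (CXs (i + 1)) (CWs (i + 1)) ≤ lossA p (CXs i) (CWs i) := fun i =>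
  (lossA_le_of_col_update hpos (hb i)).trans (lossA_le_of_row_update hpos (ha i))

/-- Step-1 monotonicity of the co-clustering iterations: if the row updates and the
column updates each do not increase the corresponding conditional KL divergences, then
the objective `ℓ_A` is non-increasing along iterations. -/
theorem step1_monotone {X W Xs Ws : Type*} [Fintype X] [Fintype W] [Nonempty X] [Nonempty W]
    [Fintype Xs] [Fintype Ws] [DecidableEq Xs] [DecidableEq Ws]
    (p : X × W → ℝ) (hpos : ∀ c, 0 < p c) (hsum : ∑ c, p c = 1)
    (CXs : ℕ → X → Xs) (CWs : ℕ → W → Ws)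
    (ha : ∀ i : ℕ, ∀ x : X,
      KLdiv (condRow p x) (approxCondRow p (CXs i) (CWs i) (CXs (i + 1) x))
        ≤ KLdiv (condRow p x) (approxCondRow p (CXs i) (CWs i) (CXs i x)))
    (hb : ∀ i : ℕ, ∀ w : W,
      KLdiv (condCol p w) (approxCondCol p (CXs (i + 1)) (CWs i) (CWs (i + 1) w))
        ≤ KLdiv (condCol p w) (approxCondCol p (CXs (i + 1)) (CWs i) (CWs i w))) :
    ∀ i : ℕ, lossA p (CXs (i + 1)) (CWs (i + 1)) ≤ lossA p (CXs i) (CWs i) :=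
  step1_monotone_general p hpos CXs CWs ha hb
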